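/- Let α, β, C > 0. The system of equations α = (A₁/2)(A₁ + A₂ − C) and β = (A₂/2)(A₁ + A₂ − C) has a unique solution (A₁, A₂) with A₁ > 0, A₂ > 0 and A₁ + A₂ > C, namely A₁ = (α/(α+β))·(C/2)·(1 + √(1 + 8(α+β)/C²)) and A₂ = (β/(α+β))·(C/2)·(1 + √(1 + 8(α+β)/C²)); moreover for this solution C·A₁/(A₁+A₂) = α·C/(α+β) and C·A₂/(A₁+A₂) = β·C/(α+β). -/

import Mathlib

/-! Adding the two equations shows that the total rate `T = A₁ + A₂` solves
`T (T - C) / 2 = α + β`, i.e. `(2T - C)² = C² + 8(α + β)`, whose only root above `C` is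
`(C/2)(1 + √(1 + 8(α + β)/C²))`. Since both equations share the factor `(T - C)/2`, the rates
split in the ratio `A₁ : A₂ = α : β`. -/

open Real

noncomputable def totalRate (γ C : ℝ) : ℝ := C / 2 * (1 + √(1 + 8 * γ / C ^ 2))

section totalRate

variable {γ C T : ℝ}

theorem sq_two_mul_totalRate_sub (hC : C ≠ 0) (hγ : 0 ≤ γ) :
    (2 * totalRate γ C - C) ^ 2 = C ^ 2 + 8 * γ := by
  have hs : √(1 + 8 * γ / C ^ 2) ^ 2 = 1 + 8 * γ / C ^ 2 := sq_sqrt (by positivity)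
  calc (2 * totalRate γ C - C) ^ 2 = C ^ 2 * √(1 + 8 * γ / C ^ 2) ^ 2 := by
        unfold totalRate; ring
    _ = C ^ 2 + 8 * γ := by rw [hs]; field_simp

theorem lt_totalRate (hC : 0 < C) (hγ : 0 < γ) : C < totalRate γ C := by
  have hs : 1 < √(1 + 8 * γ / C ^ 2) := by
    rw [lt_sqrt zero_le_one, one_pow, lt_add_iff_pos_right]
    positivity
  unfold totalRate
  nlinarith

theorem half_mul_sub_eq_iff_eq_totalRate (hC : 0 < C) (hγ : 0 < γ) :
    C < T ∧ T / 2 * (T - C) = γ ↔ T = totalRate γ C := by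
  have hroot := sq_two_mul_totalRate_sub hC.ne' hγ.le
  have hsq : T / 2 * (T - C) = γ ↔ (2 * T - C) ^ 2 = C ^ 2 + 8 * γ := by
    have : (2 * T - C) ^ 2 = 8 * (T / 2 * (T - C)) + C ^ 2 := by ring
    constructor <;> intro h <;> linarith
  have hlt := lt_totalRate hC hγ
  constructor
  · rintro ⟨hT, h⟩
    have := (sq_eq_sq₀ (by linarith) (by linarith)).1 ((hsq.1 h).trans hroot.symm)
    linarith
  · rintro rfl
    exact ⟨hlt, hsq.2 hroot⟩

end totalRate

section split

variable {α β A₁ A₂ : ℝ}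

theorem eq_div_add_mul_add_of_eq_mul {k : ℝ} (h₁ : α = A₁ * k) (h₂ : β = A₂ * k)
    (h : α + β ≠ 0) :
    A₁ = α / (α + β) * (A₁ + A₂) ∧ A₂ = β / (α + β) * (A₁ + A₂) := by
  constructor <;> rw [div_mul_eq_mul_div, eq_div_iff h, h₁, h₂] <;> ring

theorem div_add_mul_add_div_add_mul (h : α + β ≠ 0) (T : ℝ) :
    α / (α + β) * T + β / (α + β) * T = T := by
  rw [← add_mul, ← add_div, div_self h, one_mul]

end split

section stationary

variable {α β C A₁ A₂ : ℝ}

theorem lqf_stationary_iff (hα : 0 < α) (hβ : 0 < β) (hC : 0 < C) :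
    (0 < A₁ ∧ 0 < A₂ ∧ C < A₁ + A₂ ∧
        α = A₁ / 2 * (A₁ + A₂ - C) ∧ β = A₂ / 2 * (A₁ + A₂ - C)) ↔
      A₁ = α / (α + β) * totalRate (α + β) C ∧ A₂ = β / (α + β) * totalRate (α + β) C := by
  have hγ : 0 < α + β := add_pos hα hβ
  constructor
  · rintro ⟨-, -, hT, h₁, h₂⟩
    have hsum : A₁ + A₂ = totalRate (α + β) C :=
      (half_mul_sub_eq_iff_eq_totalRate hC hγ).1 ⟨hT, by rw [h₁, h₂]; ring⟩
    rw [← hsum]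
    exact eq_div_add_mul_add_of_eq_mul (k := (A₁ + A₂ - C) / 2)
      (h₁.trans (by ring)) (h₂.trans (by ring)) hγ.ne'
  · rintro ⟨rfl, rfl⟩
    obtain ⟨hlt, hroot⟩ := (half_mul_sub_eq_iff_eq_totalRate hC hγ).2 rfl
    have hpos : 0 < totalRate (α + β) C := hC.trans hlt
    rw [div_add_mul_add_div_add_mul hγ.ne']
    refine ⟨mul_pos (div_pos hα hγ) hpos, mul_pos (div_pos hβ hγ) hpos, hlt, ?_, ?_⟩
    · rw [mul_div_assoc, mul_assoc, hroot, div_mul_cancel₀ α hγ.ne']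
    · rw [mul_div_assoc, mul_assoc, hroot, div_mul_cancel₀ β hγ.ne']

theorem lqf_throughput {T : ℝ} (hγ : α + β ≠ 0) (hT : T ≠ 0) :
    C * (α / (α + β) * T) / (α / (α + β) * T + β / (α + β) * T) = α * C / (α + β) ∧
      C * (β / (α + β) * T) / (α / (α + β) * T + β / (α + β) * T) = β * C / (α + β) := by
  rw [div_add_mul_add_div_add_mul hγ]
  constructor <;> field_simp

end stationary

theorem lqf_two_flow_stationary (α β C : ℝ) (hα : 0 < α) (hβ : 0 < β) (hC : 0 < C) :
    (∀ A₁ A₂ : ℝ,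
      (0 < A₁ ∧ 0 < A₂ ∧ C < A₁ + A₂ ∧
        α = (A₁ / 2) * (A₁ + A₂ - C) ∧ β = (A₂ / 2) * (A₁ + A₂ - C)) ↔
      (A₁ = (α / (α + β)) * (C / 2) * (1 + Real.sqrt (1 + 8 * (α + β) / C ^ 2)) ∧
       A₂ = (β / (α + β)) * (C / 2) * (1 + Real.sqrt (1 + 8 * (α + β) / C ^ 2)))) ∧
    (∀ A₁ A₂ : ℝ,
      A₁ = (α / (α + β)) * (C / 2) * (1 + Real.sqrt (1 + 8 * (α + β) / C ^ 2)) →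
      A₂ = (β / (α + β)) * (C / 2) * (1 + Real.sqrt (1 + 8 * (α + β) / C ^ 2)) →
      C * A₁ / (A₁ + A₂) = α * C / (α + β) ∧
      C * A₂ / (A₁ + A₂) = β * C / (α + β)) := by
  have hγ : 0 < α + β := add_pos hα hβ
  have hT : totalRate (α + β) C ≠ 0 := (hC.trans (lt_totalRate hC hγ)).ne'
  have hform : ∀ a : ℝ, a * (C / 2) * (1 + √(1 + 8 * (α + β) / C ^ 2)) =
      a * totalRate (α + β) C := fun a => mul_assoc _ _ _
  simp only [hform]
  refine ⟨fun A₁ A₂ => lqf_stationary_iff hα hβ hC, ?_⟩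
  rintro A₁ A₂ rfl rfl
  exact lqf_throughput hγ.ne' hT
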